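/- For N ≥ 3, the W state W_N = (1/√N) ∑_{j=1}^{N} |0⟩^⊗(j-1) ⊗ |1⟩ ⊗ |0⟩^⊗(N-j) has optimal bond dimension exactly N: it can be written as a sum of N tensor powers x_k^⊗N of qubit vectors, but not as a sum of N-1 or fewer such tensor powers. -/

import Mathlib

/-!
A tensor power `x^⊗N` sees a basis configuration only through its weight `w` (the number of
ones), as `x₀^(N-w) x₁^w`, while `W_N` is supported on weight one.

Upper bound: for a primitive `N`-th root of unity `ζ`, the vectors `(ζᵏ, 1)` with coefficients
`ζᵏ` produce the character sum `∑ₖ ζ^(k(N+1-w))`, which vanishes unless `w = 1`; the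
coefficients are then absorbed into the vectors by taking `N`-th roots.

Lower bound: with `rₖ = xₖ₀ / xₖ₁`, the values of `W_N` in weight `N - i` are the weighted
power sums `∑ₖ xₖ₁^N rₖ^i` (terms with `xₖ₁ = 0` vanish on both sides), which are zero for
`i < N - 1` and nonzero for `i = N - 1`. With fewer than `N` terms, the monic polynomial
`∏ₖ (X - rₖ)` expresses the `(N-1)`-st power sum through lower ones, a contradiction.
-/

open scoped BigOperators

/-- The `N`-fold tensor power of a qubit vector `x : Fin 2 → ℂ`, written as a
coefficient tensor on `(Fin N → Fin 2)`. -/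
def tpow (x : Fin 2 → ℂ) (N : ℕ) : (Fin N → Fin 2) → ℂ :=
  fun f => ∏ i, x (f i)

/-- A state of `N` qubits is symmetric if it is invariant under every
permutation of the tensor factors. -/
def IsSymmetricState {N : ℕ} (ψ : (Fin N → Fin 2) → ℂ) : Prop :=
  ∀ σ : Equiv.Perm (Fin N), ∀ f : Fin N → Fin 2, ψ (f ∘ σ) = ψ f

/-- A family of qubit vectors is pairwise linearly independent if every two
distinct members are linearly independent. -/
def PairwiseLinIndep {D : ℕ} (x : Fin D → Fin 2 → ℂ) : Prop :=
  ∀ k l : Fin D, k ≠ l → LinearIndependent ℂ ![x k, x l]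

/-- Optimal bond dimension: the minimal `D` such that `ψ` is a sum of `D`
`N`-fold tensor powers of qubit vectors. -/
noncomputable def bondDim {N : ℕ} (ψ : (Fin N → Fin 2) → ℂ) : ℕ :=
  sInf {D | ∃ x : Fin D → Fin 2 → ℂ, ψ = ∑ k : Fin D, tpow (x k) N}

/-- Standard basis vector `|0⟩` of `ℂ²`. -/
def e0 : Fin 2 → ℂ := fun i => if i = 0 then 1 else 0

/-- Standard basis vector `|1⟩` of `ℂ²`. -/
def e1 : Fin 2 → ℂ := fun i => if i = 1 then 1 else 0

/-- The GHZ state of `N` qubits. -/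
noncomputable def GHZ (N : ℕ) : (Fin N → Fin 2) → ℂ :=
  (1 / (Real.sqrt 2 : ℂ)) • (tpow e0 N + tpow e1 N)

/-- The W state of `N` qubits. -/
noncomputable def Wstate (N : ℕ) : (Fin N → Fin 2) → ℂ :=
  fun f => (1 / (Real.sqrt N : ℂ)) *
    ∑ j : Fin N, ∏ i : Fin N, (if i = j then e1 (f i) else e0 (f i))

/-- Tensor product of an `M`-qubit tensor and an `L`-qubit tensor. -/
def otimes {M L : ℕ} (ξ : (Fin M → Fin 2) → ℂ) (χ : (Fin L → Fin 2) → ℂ) :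
    (Fin (M + L) → Fin 2) → ℂ :=
  fun f => ξ (fun i => f (Fin.castAdd L i)) * χ (fun j => f (Fin.natAdd M j))

/-- Schmidt rank of an `(M, L)`-bipartite state: the minimal number of product
terms needed to express it. -/
noncomputable def schmidtRank {M L : ℕ} (ψ : (Fin (M + L) → Fin 2) → ℂ) : ℕ :=
  sInf {s | ∃ ξ : Fin s → (Fin M → Fin 2) → ℂ, ∃ χ : Fin s → (Fin L → Fin 2) → ℂ,
    ψ = ∑ k : Fin s, otimes (ξ k) (χ k)}

/-- Reduced density matrix of the first `M` qubits of an `(M + L)`-qubit state,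
obtained by tracing out the last `L` qubits. -/
noncomputable def rdm (M L : ℕ) (ψ : (Fin (M + L) → Fin 2) → ℂ) :
    Matrix (Fin M → Fin 2) (Fin M → Fin 2) ℂ :=
  Matrix.of fun a b => ∑ g : Fin L → Fin 2, ψ (Fin.append a g) * star (ψ (Fin.append b g))

open Finset

section Weight

variable {N : ℕ}

def weight (f : Fin N → Fin 2) : ℕ := #{i | f i = 1}

lemma weight_le (f : Fin N → Fin 2) : weight f ≤ N :=
  (card_filter_le _ _).trans_eq (card_fin N)

lemma exists_weight_eq {j : ℕ} (hj : j ≤ N) : ∃ f : Fin N → Fin 2, weight f = j := by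
  obtain ⟨t, -, ht⟩ := exists_subset_card_eq (s := (univ : Finset (Fin N))) (by simpa using hj)
  refine ⟨fun i => if i ∈ t then 1 else 0, ?_⟩
  simp [weight, ← ht]

lemma tpow_apply (x : Fin 2 → ℂ) (f : Fin N → Fin 2) :
    tpow x N f = x 0 ^ (N - weight f) * x 1 ^ weight f := by
  have hzero : #{i | f i ≠ 1} = N - weight f := by
    rw [filter_not, card_sdiff_of_subset (filter_subset _ _), card_univ,
      Fintype.card_fin, weight]
  rw [tpow, ← prod_filter_not_mul_prod_filter univ fun i => f i = 1, ← hzero, weight,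
    ← prod_const, ← prod_const]
  congr 1 <;> refine prod_congr rfl fun i hi => ?_
  · rw [show f i = 0 by have := (mem_filter.mp hi).2; omega]
  · rw [(mem_filter.mp hi).2]

lemma Wstate_apply (f : Fin N → Fin 2) :
    Wstate N f = (Real.sqrt N : ℂ)⁻¹ * if weight f = 1 then 1 else 0 := by
  have hterm (j : Fin N) : (∏ i, if i = j then e1 (f i) else e0 (f i)) =
      if ({i | f i = 1} : Finset (Fin N)) = {j} then 1 else 0 := by
    have (i : Fin N) :
        (if i = j then e1 (f i) else e0 (f i)) = if (f i = 1 ↔ i = j) then 1 else 0 := by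
      generalize f i = v
      fin_cases v <;> by_cases i = j <;> simp_all [e0, e1]
    simp only [this, Fintype.prod_boole]
    congr 1
    simp [Finset.ext_iff]
  rw [Wstate, one_div]
  congr 1
  simp_rw [hterm]
  split_ifs with h
  · obtain ⟨a, ha⟩ := card_eq_one.mp h
    simp [ha]
  · exact sum_eq_zero fun j _ => if_neg fun hj => h (by rw [weight, hj, card_singleton])

end Weight

open Polynomial in
theorem sum_mul_pow_eq_zero_of_card_le {R ι : Type*} [CommRing R] (s : Finset ι) (w r : ι → R)
    {n : ℕ} (hn : #s ≤ n) (h : ∀ i < n, ∑ k ∈ s, w k * r k ^ i = 0) :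
    ∑ k ∈ s, w k * r k ^ n = 0 := by
  rcases subsingleton_or_nontrivial R with hR | hR
  · exact Subsingleton.elim _ _
  set q : R[X] := ∏ k ∈ s, (X - C (r k))
  have hq : q.natDegree = #s := natDegree_finsetProd_X_sub_C_eq_card s r
  have hroot : ∀ k ∈ s, q.eval (r k) = 0 := fun k hk => by
    simp only [q, eval_prod, eval_sub, eval_X, eval_C]
    exact prod_eq_zero hk (sub_self _)
  calc ∑ k ∈ s, w k * r k ^ n
      = ∑ i ∈ range (#s + 1), q.coeff i * ∑ k ∈ s, w k * r k ^ (n - #s + i) := by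
        rw [sum_range_succ, Nat.sub_add_cancel hn, ← hq, (monic_prod_X_sub_C r s).coeff_natDegree,
          one_mul, right_eq_add]
        exact sum_eq_zero fun i hi => by rw [h _ (by simp at hi; omega), mul_zero]
    _ = ∑ k ∈ s, w k * r k ^ (n - #s) * q.eval (r k) := by
        simp only [eval_eq_sum_range, hq, mul_sum]
        rw [sum_comm]
        exact sum_congr rfl fun k _ => sum_congr rfl fun i _ => by ring
    _ = 0 := sum_eq_zero fun k hk => by rw [hroot k hk, mul_zero]

lemma pow_mul_pow_sub_eq_pow_mul_div_pow {K : Type*} [Field K] (a b : K) {i N : ℕ}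
    (hi : i < N) :
    a ^ i * b ^ (N - i) = b ^ N * (a / b) ^ i := by
  rcases eq_or_ne b 0 with rfl | hb
  · simp [zero_pow (Nat.sub_ne_zero_of_lt hi), zero_pow (Nat.ne_zero_of_lt hi)]
  · rw [div_pow, ← pow_sub_mul_pow b hi.le]
    field_simp

theorem Wstate_ne_sum_tpow {N D : ℕ} (hD : D < N) (x : Fin D → Fin 2 → ℂ) :
    Wstate N ≠ ∑ k, tpow (x k) N := by
  intro hx
  have hS (i : ℕ) (hi : i < N) : ∑ k, x k 1 ^ N * (x k 0 / x k 1) ^ i =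
      (Real.sqrt N : ℂ)⁻¹ * if i = N - 1 then 1 else 0 := by
    obtain ⟨f, hf⟩ := exists_weight_eq (show N - i ≤ N by omega)
    have hxf := congrFun hx f
    simp only [Wstate_apply, hf, Finset.sum_apply, tpow_apply, Nat.sub_sub_self hi.le,
      pow_mul_pow_sub_eq_pow_mul_div_pow _ _ hi] at hxf
    rw [← hxf, if_congr (show N - i = 1 ↔ i = N - 1 by omega) rfl rfl]
  have hvanish := sum_mul_pow_eq_zero_of_card_le (univ : Finset (Fin D)) _ _ (n := N - 1)
    (by simp; omega) fun i hi => by rw [hS i (by omega), if_neg hi.ne, mul_zero]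
  rw [hS (N - 1) (by omega), if_pos rfl, mul_one] at hvanish
  exact inv_ne_zero (by simp; omega) hvanish

lemma tpow_smul (c : ℂ) (x : Fin 2 → ℂ) (N : ℕ) : tpow (c • x) N = c ^ N • tpow x N := by
  ext f
  simp [tpow, prod_mul_distrib]

lemma exists_sum_tpow_eq_sum_smul_tpow {ι : Type*} [Fintype ι] {N : ℕ} (hN : N ≠ 0)
    (c : ι → ℂ) (x : ι → Fin 2 → ℂ) :
    ∃ y : ι → Fin 2 → ℂ, ∑ k, tpow (y k) N = ∑ k, c k • tpow (x k) N := by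
  choose z hz using fun k => IsAlgClosed.exists_pow_nat_eq (c k) (Nat.pos_of_ne_zero hN)
  exact ⟨fun k => z k • x k, by simp [tpow_smul, hz]⟩

theorem IsPrimitiveRoot.geom_sum_pow_eq_ite {R : Type*} [CommRing R] [IsDomain R] {ζ : R}
    {N : ℕ} (hζ : IsPrimitiveRoot ζ N) (m : ℕ) :
    ∑ k ∈ range N, (ζ ^ m) ^ k = if N ∣ m then (N : R) else 0 := by
  split_ifs with h
  · simp [(hζ.pow_eq_one_iff_dvd m).mpr h]
  · have hne : ζ ^ m - 1 ≠ 0 := sub_ne_zero.mpr fun h1 => h ((hζ.pow_eq_one_iff_dvd m).mp h1)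
    have hgeom : (∑ k ∈ range N, (ζ ^ m) ^ k) * (ζ ^ m - 1) = 0 := by
      rw [geom_sum_mul, ← pow_mul, mul_comm, pow_mul, hζ.pow_eq_one, one_pow, sub_self]
    exact (mul_eq_zero.mp hgeom).resolve_right hne

lemma dvd_sub_add_one_iff {N w : ℕ} (hN : 2 ≤ N) (hw : w ≤ N) : N ∣ N - w + 1 ↔ w = 1 := by
  refine ⟨fun ⟨c, hc⟩ => ?_, fun h => by rw [h, Nat.sub_add_cancel (by omega)]⟩
  rcases c with _ | _ | c
  · omega
  · omega
  · have : 2 * N ≤ N * (c + 1 + 1) := by nlinarith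
    omega

theorem Wstate_eq_sum_smul_tpow {N : ℕ} (hN : 2 ≤ N) {ζ : ℂ} (hζ : IsPrimitiveRoot ζ N) :
    Wstate N = ∑ k : Fin N, (ζ ^ (k : ℕ) / (N * Real.sqrt N)) • tpow ![ζ ^ (k : ℕ), 1] N := by
  ext f
  have hterm (k : ℕ) : ζ ^ k / (N * Real.sqrt N) * ((ζ ^ k) ^ (N - weight f) * 1 ^ weight f) =
      (ζ ^ (N - weight f + 1)) ^ k / (N * Real.sqrt N) := by
    ring
  simp only [Wstate_apply, Finset.sum_apply, Pi.smul_apply, smul_eq_mul, tpow_apply,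
    Matrix.cons_val_zero, Matrix.cons_val_one, hterm, ← sum_div]
  rw [Fin.sum_univ_eq_sum_range (fun k => (ζ ^ (N - weight f + 1)) ^ k) N,
    hζ.geom_sum_pow_eq_ite, if_congr (dvd_sub_add_one_iff hN (weight_le f)) rfl rfl]
  have : (N : ℂ) ≠ 0 := by simp; omega
  split_ifs
  · field_simp
  · simp

theorem exists_Wstate_eq_sum_tpow {N : ℕ} (hN : 2 ≤ N) :
    ∃ x : Fin N → Fin 2 → ℂ, Wstate N = ∑ k, tpow (x k) N := by
  rw [Wstate_eq_sum_smul_tpow hN (Complex.isPrimitiveRoot_exp N (by omega))]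
  exact (exists_sum_tpow_eq_sum_smul_tpow (by omega) _ _).imp fun _ => Eq.symm

lemma bondDim_eq_of_forall_lt {N D : ℕ} {ψ : (Fin N → Fin 2) → ℂ}
    (hD : ∃ x : Fin D → Fin 2 → ℂ, ψ = ∑ k, tpow (x k) N)
    (hlt : ∀ D' < D, ¬ ∃ x : Fin D' → Fin 2 → ℂ, ψ = ∑ k, tpow (x k) N) :
    bondDim ψ = D :=
  le_antisymm (Nat.sInf_le hD) (le_csInf ⟨D, hD⟩ fun D' hD' => not_lt.mp fun h => hlt D' h hD')

/-- for `N ≥ 3` the W state has optimal bond dimension exactly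
`N`: it is a sum of `N` tensor powers, but not of `N-1` or fewer. -/
theorem bondDim_W (N : ℕ) (hN : 3 ≤ N) :
    bondDim (Wstate N) = N ∧
      (∃ x : Fin N → Fin 2 → ℂ, Wstate N = ∑ k : Fin N, tpow (x k) N) ∧
      (∀ D : ℕ, D < N → ¬ ∃ x : Fin D → Fin 2 → ℂ,
        Wstate N = ∑ k : Fin D, tpow (x k) N) := by
  have hup := exists_Wstate_eq_sum_tpow (by omega : 2 ≤ N)
  have hlow : ∀ D < N, ¬ ∃ x : Fin D → Fin 2 → ℂ, Wstate N = ∑ k, tpow (x k) N :=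
    fun D hD ⟨x, hx⟩ => Wstate_ne_sum_tpow hD x hx
  exact ⟨bondDim_eq_of_forall_lt hup hlow, hup, hlow⟩
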